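/- Let G be a connected graph with minimum degree δ(G) ≥ 4 and at least 5 vertices. Then b_tr(G) ≤ 2·ad(G) + Δ(G) − 4, where ad(G) = 2|E(G)|/|V(G)| is the average degree. -/

import Mathlib

open SimpleGraph Finset

variable {V : Type*} [Fintype V] [DecidableEq V]

/-- The number of orbits (cycles together with fixed points) of a permutation of a finite type. -/
noncomputable def permNumOrbits {α : Type*} [Fintype α] [DecidableEq α] (ψ : Equiv.Perm α) : ℕ :=
  Multiset.card ψ.cycleType + (Finset.univ.filter fun a => ψ a = a).card

/-- A combinatorial (2-cell) embedding scheme of a graph on a surface: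
a rotation system together with an edge signature (Mohar–Thomassen). -/
structure SimpleGraph.EmbeddingScheme (G : SimpleGraph V) [DecidableRel G.Adj] where
  rot : Equiv.Perm G.Dart
  rot_fst : ∀ d : G.Dart, (rot d).toProd.1 = d.toProd.1
  rot_cyclic : ∀ d e : G.Dart, d.toProd.1 = e.toProd.1 → ∃ k : ℕ, (rot ^ k) d = e
  sign : G.Dart → ℤˣ
  sign_symm : ∀ d : G.Dart, sign d.symm = sign d

namespace SimpleGraph.EmbeddingScheme

variable {G : SimpleGraph V} [DecidableRel G.Adj] (S : G.EmbeddingScheme)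

def swapPerm : Equiv.Perm (G.Dart × ℤˣ) :=
  Function.Involutive.toPerm (fun p => (p.1.symm, p.2 * S.sign p.1)) (by
    intro p
    simp [SimpleGraph.Dart.symm_symm, S.sign_symm p.1, mul_assoc, Int.units_mul_self])

def rotPerm : Equiv.Perm (G.Dart × ℤˣ) where
  toFun p := ((S.rot ^ (p.2 : ℤ)) p.1, p.2)
  invFun p := ((S.rot ^ (-(p.2 : ℤ))) p.1, p.2)
  left_inv p := by
    simp [← Equiv.Perm.mul_apply, ← zpow_add]
  right_inv p := by
    show ((S.rot ^ (p.2 : ℤ)) ((S.rot ^ (-(p.2 : ℤ))) p.1), p.2) = p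
    rw [← Equiv.Perm.mul_apply, ← zpow_add, add_neg_cancel, zpow_zero]; rfl

/-- The face-tracing permutation on signed darts. -/
def faceMap : Equiv.Perm (G.Dart × ℤˣ) := S.swapPerm.trans S.rotPerm

/-- Each face is traced by exactly two orbits of the face-tracing permutation. -/
noncomputable def numFaces : ℕ := permNumOrbits S.faceMap / 2

/-- The Euler characteristic of the closed surface determined by the scheme. -/
noncomputable def eulerChar : ℤ :=
  (Fintype.card V : ℤ) - (G.edgeFinset.card : ℤ) + (S.numFaces : ℤ)

/-- The scheme describes an embedding on an orientable surface iff its signature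
is switching-equivalent to the all-positive signature. -/
def IsOrientable : Prop := ∃ θ : V → ℤˣ, ∀ d : G.Dart, S.sign d = θ d.toProd.1 * θ d.toProd.2

end SimpleGraph.EmbeddingScheme

/-- `G` has orientable genus `g`. -/
def SimpleGraph.HasOrientableGenus (G : SimpleGraph V) [DecidableRel G.Adj] (g : ℕ) : Prop :=
  (∃ S : G.EmbeddingScheme, S.IsOrientable ∧ S.eulerChar = 2 - 2 * (g : ℤ)) ∧
  ∀ g' : ℕ, g' < g → ¬ ∃ S : G.EmbeddingScheme, S.IsOrientable ∧ S.eulerChar = 2 - 2 * (g' : ℤ)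

/-- `G` has nonorientable genus `k`. -/
def SimpleGraph.HasNonorientableGenus (G : SimpleGraph V) [DecidableRel G.Adj] (k : ℕ) : Prop :=
  (∃ S : G.EmbeddingScheme, ¬ S.IsOrientable ∧ S.eulerChar = 2 - (k : ℤ)) ∧
  ∀ k' : ℕ, k' < k → ¬ ∃ S : G.EmbeddingScheme, ¬ S.IsOrientable ∧ S.eulerChar = 2 - (k' : ℤ)

/-- `G` is planar: every component embeds in the sphere. -/
def SimpleGraph.IsPlanar (G : SimpleGraph V) [DecidableRel G.Adj] : Prop :=
  ∃ S : G.EmbeddingScheme, S.IsOrientable ∧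
    S.eulerChar = 2 * (Nat.card G.ConnectedComponent : ℤ)

/-- `S` is a total dominating set: every vertex has a neighbour in `S`. -/
def SimpleGraph.IsTotalDominatingSet (G : SimpleGraph V) (S : Finset V) : Prop :=
  ∀ v : V, ∃ u ∈ S, G.Adj u v

noncomputable def SimpleGraph.totalDominationNumber (G : SimpleGraph V) : ℕ :=
  sInf {k : ℕ | ∃ S : Finset V, G.IsTotalDominatingSet S ∧ S.card = k}

/-- The spanning subgraph of `G` keeping only edges meeting `S`. -/
def SimpleGraph.weakSubgraph (G : SimpleGraph V) (S : Finset V) : SimpleGraph V where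
  Adj u v := G.Adj u v ∧ (u ∈ S ∨ v ∈ S)
  symm := ⟨fun u v h => ⟨h.1.symm, h.2.symm⟩⟩
  loopless := ⟨fun v h => G.loopless.irrefl v h.1⟩

/-- `S` is a weakly connected dominating set. -/
def SimpleGraph.IsWeaklyConnectedDominatingSet (G : SimpleGraph V) (S : Finset V) : Prop :=
  S.Nonempty ∧ (G.weakSubgraph S).Connected

noncomputable def SimpleGraph.weaklyConnectedDominationNumber (G : SimpleGraph V) : ℕ :=
  sInf {k : ℕ | ∃ S : Finset V, G.IsWeaklyConnectedDominatingSet S ∧ S.card = k}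

/-- `S` is a connected dominating set. -/
def SimpleGraph.IsConnectedDominatingSet (G : SimpleGraph V) (S : Finset V) : Prop :=
  (∀ v ∉ S, ∃ u ∈ S, G.Adj u v) ∧ (G.induce (S : Set V)).Connected

noncomputable def SimpleGraph.connectedDominationNumber (G : SimpleGraph V) : ℕ :=
  sInf {k : ℕ | ∃ S : Finset V, G.IsConnectedDominatingSet S ∧ S.card = k}

/-- `S` is a restrained dominating set. -/
def SimpleGraph.IsRestrainedDominatingSet (G : SimpleGraph V) (S : Finset V) : Prop :=
  ∀ v ∉ S, (∃ u ∈ S, G.Adj u v) ∧ (∃ w ∉ S, G.Adj w v)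

noncomputable def SimpleGraph.restrainedDominationNumber (G : SimpleGraph V) : ℕ :=
  sInf {k : ℕ | ∃ S : Finset V, G.IsRestrainedDominatingSet S ∧ S.card = k}

/-- The restrained bondage number. -/
noncomputable def SimpleGraph.restrainedBondageNumber (G : SimpleGraph V) : ℕ :=
  sInf {k : ℕ | ∃ F : Finset (Sym2 V), ↑F ⊆ G.edgeSet ∧ F.card = k ∧
    G.restrainedDominationNumber < (G.deleteEdges ↑F).restrainedDominationNumber}

/-- `S` is a total restrained dominating set. -/
def SimpleGraph.IsTotalRestrainedDominatingSet (G : SimpleGraph V) (S : Finset V) : Prop :=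
  (∀ v : V, ∃ u ∈ S, G.Adj u v) ∧ ∀ v ∉ S, ∃ w ∉ S, G.Adj w v

noncomputable def SimpleGraph.totalRestrainedDominationNumber (G : SimpleGraph V) : ℕ :=
  sInf {k : ℕ | ∃ S : Finset V, G.IsTotalRestrainedDominatingSet S ∧ S.card = k}

/-- The total restrained bondage number (`⊤` if no suitable edge set exists). -/
noncomputable def SimpleGraph.totalRestrainedBondageNumber (G : SimpleGraph V) : ℕ∞ :=
  sInf {k : ℕ∞ | ∃ F : Finset (Sym2 V), ↑F ⊆ G.edgeSet ∧ (F.card : ℕ∞) = k ∧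
    (∀ v : V, ∃ u : V, (G.deleteEdges ↑F).Adj u v) ∧
    G.totalRestrainedDominationNumber < (G.deleteEdges ↑F).totalRestrainedDominationNumber}

/-- Roman dominating function. -/
def SimpleGraph.IsRomanDominatingFunction (G : SimpleGraph V) (f : V → ℕ) : Prop :=
  (∀ v : V, f v ≤ 2) ∧ ∀ v : V, f v = 0 → ∃ u : V, G.Adj u v ∧ f u = 2

noncomputable def SimpleGraph.romanDominationNumber (G : SimpleGraph V) : ℕ :=
  sInf {k : ℕ | ∃ f : V → ℕ, G.IsRomanDominatingFunction f ∧ ∑ v : V, f v = k}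

noncomputable def SimpleGraph.romanBondageNumber (G : SimpleGraph V) : ℕ :=
  sInf {k : ℕ | ∃ F : Finset (Sym2 V), ↑F ⊆ G.edgeSet ∧ F.card = k ∧
    G.romanDominationNumber < (G.deleteEdges ↑F).romanDominationNumber}

/-- The minimum edge-degree `ξ(G)`. -/
noncomputable def SimpleGraph.minEdgeDegree (G : SimpleGraph V) [DecidableRel G.Adj] : ℕ :=
  sInf {k : ℕ | ∃ d : G.Dart, G.degree d.toProd.1 + G.degree d.toProd.2 - 2 = k}

/-- A restricted edge-cut: removing it disconnects `G` leaving no isolated vertex. -/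
def SimpleGraph.IsRestrictedEdgeCut (G : SimpleGraph V) (F : Finset (Sym2 V)) : Prop :=
  ↑F ⊆ G.edgeSet ∧ ¬ (G.deleteEdges ↑F).Connected ∧
    ∀ v : V, ∃ u : V, (G.deleteEdges ↑F).Adj u v

/-- The restricted edge-connectivity `λ'(G)`. -/
noncomputable def SimpleGraph.restrictedEdgeConnectivity (G : SimpleGraph V) : ℕ :=
  sInf {k : ℕ | ∃ F : Finset (Sym2 V), G.IsRestrictedEdgeCut F ∧ F.card = k}

/-- `G` is a star: all edges share a common vertex. -/
def SimpleGraph.IsStar (G : SimpleGraph V) : Prop :=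
  ∃ c : V, ∀ e ∈ G.edgeSet, c ∈ e

/-- The average degree `2|E|/|V|` of `G`. -/
noncomputable def SimpleGraph.averageDegree (G : SimpleGraph V) [DecidableRel G.Adj] : ℝ :=
  2 * (G.edgeFinset.card : ℝ) / (Fintype.card V : ℝ)

def h1 (x : ℕ) : ℕ := if x ≤ 3 then 2 * x + 13 else 4 * x + 7
def h2 (x : ℕ) : ℕ := if x = 0 then 8 else 4 * x + 5
def k1 (x : ℕ) : ℕ := if x ≤ 2 then 2 * x + 11 else if x ≤ 5 then 2 * x + 9 else 2 * x + 7
def k2 (x : ℕ) : ℕ := if x = 1 then 8 else 2 * x + 5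

/-!
Hartnell–Rall: if every two vertices at distance at most 2 had degree sum above `2 a`, with
`a = ad(G)`, then the vertices of degree at most `a` would have pairwise disjoint neighbourhoods
made of vertices of degree above `a`, and the excess `∑ (deg v - a) = 0` would come out negative.
Adding a neighbour (of degree at most `Δ`) to such a pair gives a path `x y z` with
`deg x + deg y + deg z ≤ 2 a + Δ`.

Deleting the edges at `x`, `y`, `z` other than `xy` and `yz` (at most `deg x + deg y + deg z - 4`
of them) makes the path `x y z` a component. Every total restrained dominating set of the new
graph contains `x`, `y`, `z`, and removing one of them, or all three, yields a smaller total
restrained dominating set of `G`; minimum degree 4 keeps a neighbour outside the path at every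
vertex, which is what both steps need.
-/

namespace SimpleGraph

section TotalRestrainedDomination

variable {V : Type*} {G : SimpleGraph V}

lemma IsTotalRestrainedDominatingSet.totalRestrainedDominationNumber_le {S : Finset V}
    (hS : G.IsTotalRestrainedDominatingSet S) : G.totalRestrainedDominationNumber ≤ #S :=
  Nat.sInf_le ⟨S, hS, rfl⟩

lemma isTotalRestrainedDominatingSet_univ [Fintype V] (hG : ∀ v, ∃ u, G.Adj u v) :
    G.IsTotalRestrainedDominatingSet univ := by
  refine ⟨fun v => ?_, fun v hv => absurd (mem_univ v) hv⟩
  obtain ⟨u, hu⟩ := hG v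
  exact ⟨u, mem_univ u, hu⟩

lemma exists_isTotalRestrainedDominatingSet_card_eq [Fintype V] (hG : ∀ v, ∃ u, G.Adj u v) :
    ∃ S, G.IsTotalRestrainedDominatingSet S ∧ #S = G.totalRestrainedDominationNumber :=
  Nat.sInf_mem (s := {k | ∃ S : Finset V, G.IsTotalRestrainedDominatingSet S ∧ #S = k})
    ⟨_, univ, isTotalRestrainedDominatingSet_univ hG, rfl⟩

lemma totalRestrainedBondageNumber_le_card {F : Finset (Sym2 V)} (hF : ↑F ⊆ G.edgeSet)
    (hiso : ∀ v, ∃ u, (G.deleteEdges ↑F).Adj u v)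
    (hlt : G.totalRestrainedDominationNumber <
      (G.deleteEdges ↑F).totalRestrainedDominationNumber) :
    G.totalRestrainedBondageNumber ≤ #F :=
  sInf_le ⟨F, hF, rfl, hiso, hlt⟩

end TotalRestrainedDomination

section AverageDegree

variable {V : Type*} [Fintype V] (G : SimpleGraph V) [DecidableRel G.Adj]

lemma exists_adj_notMem_of_card_lt_degree {p : V} (s : Finset V) (h : #s < G.degree p) :
    ∃ w ∉ s, G.Adj p w := by
  rw [← card_neighborFinset_eq_degree] at h
  obtain ⟨w, hw, hws⟩ := exists_mem_notMem_of_card_lt_card h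
  exact ⟨w, hws, (mem_neighborFinset G p w).1 hw⟩

lemma sum_degree_sub_averageDegree : ∑ v, ((G.degree v : ℝ) - G.averageDegree) = 0 := by
  rcases isEmpty_or_nonempty V with hV | hV
  · simp
  rw [sum_sub_distrib, sum_const, card_univ, nsmul_eq_mul, averageDegree,
    mul_div_cancel₀ _ (by positivity), sub_eq_zero]
  exact_mod_cast G.sum_degrees_eq_twice_card_edges

lemma exists_degree_le_averageDegree [Nonempty V] :
    ∃ v, (G.degree v : ℝ) ≤ G.averageDegree := by
  by_contra! h
  exact (sum_pos (fun v _ => sub_pos.2 (h v)) univ_nonempty).ne' G.sum_degree_sub_averageDegree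

lemma sum_add_sum_neighborFinset_le_sum [DecidableEq V] {L : Finset V} {f : V → ℝ}
    (hdisj : (L : Set V).PairwiseDisjoint fun u => G.neighborFinset u)
    (hL : ∀ u ∈ L, ∀ w, G.Adj u w → w ∉ L) (hf : ∀ v ∉ L, 0 ≤ f v) :
    ∑ u ∈ L, (f u + ∑ w ∈ G.neighborFinset u, f w) ≤ ∑ v, f v := by
  have hNL : (L.biUnion fun u => G.neighborFinset u) ⊆ Lᶜ := by
    intro w hw
    obtain ⟨u, hu, huw⟩ := mem_biUnion.1 hw
    exact mem_compl.2 (hL u hu w ((mem_neighborFinset G u w).1 huw))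
  rw [sum_add_distrib, ← sum_biUnion hdisj, ← sum_add_sum_compl L f]
  exact (add_le_add_iff_left _).2
    (sum_le_sum_of_subset_of_nonneg hNL fun v hv _ => hf v (mem_compl.1 hv))

theorem exists_degree_add_le_two_mul_averageDegree [DecidableEq V] (hG : 0 < G.minDegree) :
    ∃ u v, (G.Adj u v ∨ u ≠ v ∧ ∃ w, G.Adj u w ∧ G.Adj w v) ∧
      (G.degree u : ℝ) + G.degree v ≤ 2 * G.averageDegree := by
  have : Nonempty V := by
    by_contra! h
    simp [minDegree_of_subsingleton] at hG
  by_contra! hcon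
  set a := G.averageDegree
  set L : Finset V := {v | (G.degree v : ℝ) ≤ a}
  have hlow : ∀ u ∈ L, (G.degree u : ℝ) ≤ a := fun u hu => (mem_filter.1 hu).2
  have hnbr : ∀ u ∈ L, ∀ w, G.Adj u w → a - G.degree u < G.degree w - a :=
    fun u hu w huw => by linarith [hcon u w (Or.inl huw), hlow u hu]
  have hdisj : (L : Set V).PairwiseDisjoint fun u => G.neighborFinset u := by
    intro u hu u' hu' hne
    refine Finset.disjoint_left.2 fun w hw hw' => ?_
    rw [mem_neighborFinset] at hw hw'
    linarith [hcon u u' (Or.inr ⟨hne, w, hw, hw'.symm⟩), hlow u hu, hlow u' hu']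
  have hsum := G.sum_add_sum_neighborFinset_le_sum (f := fun v => (G.degree v : ℝ) - a) hdisj
    (fun u hu w huw hw => by linarith [hnbr u hu w huw, hlow u hu, hlow w hw]) fun v hv => by
      simp only [L, mem_filter, mem_univ, true_and, not_le] at hv
      linarith
  rw [G.sum_degree_sub_averageDegree] at hsum
  obtain ⟨v, hv⟩ := G.exists_degree_le_averageDegree
  have hlt : ∑ u ∈ L, ((G.degree u : ℝ) - 1) * (a - G.degree u) <
      ∑ u ∈ L, ((G.degree u - a) + ∑ w ∈ G.neighborFinset u, (G.degree w - a)) := by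
    refine sum_lt_sum_of_nonempty ⟨v, mem_filter.2 ⟨mem_univ v, hv⟩⟩ fun u hu => ?_
    have hN : (G.neighborFinset u).Nonempty := by
      rw [← card_pos, card_neighborFinset_eq_degree]
      exact hG.trans_le (G.minDegree_le_degree u)
    calc ((G.degree u : ℝ) - 1) * (a - G.degree u)
        = (G.degree u - a) + ∑ _w ∈ G.neighborFinset u, (a - G.degree u) := by
          rw [sum_const, card_neighborFinset_eq_degree, nsmul_eq_mul]
          ring
      _ < _ := (add_lt_add_iff_left _).2 (sum_lt_sum_of_nonempty hN fun w hw =>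
          hnbr u hu w ((mem_neighborFinset G u w).1 hw))
  exact (hlt.trans_le hsum).not_ge (sum_nonneg fun u hu => mul_nonneg
    (sub_nonneg.2 (Nat.one_le_cast.2 (hG.trans_le (G.minDegree_le_degree u))))
    (sub_nonneg.2 (hlow u hu)))

theorem exists_adj_adj_degree_add_le [DecidableEq V] (hG : 2 ≤ G.minDegree) :
    ∃ x y z, G.Adj x y ∧ G.Adj y z ∧ x ≠ z ∧
      (G.degree x : ℝ) + G.degree y + G.degree z ≤ 2 * G.averageDegree + G.maxDegree := by
  obtain ⟨u, v, huv | ⟨hne, w, huw, hwv⟩, hsum⟩ :=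
    G.exists_degree_add_le_two_mul_averageDegree (by omega)
  · obtain ⟨w, hw, hvw⟩ := G.exists_adj_notMem_of_card_lt_degree (p := v) {u}
      (by have := G.minDegree_le_degree v; rw [card_singleton]; omega)
    have : (G.degree w : ℝ) ≤ G.maxDegree := by exact_mod_cast G.degree_le_maxDegree w
    exact ⟨u, v, w, huv, hvw, fun h => hw (h ▸ mem_singleton_self u), by linarith⟩
  · have : (G.degree w : ℝ) ≤ G.maxDegree := by exact_mod_cast G.degree_le_maxDegree w
    exact ⟨u, w, v, huw, hwv, hne, by linarith⟩

end AverageDegree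

section ComponentPath

variable {V : Type*} {G H : SimpleGraph V} {x y z : V}

structure IsComponentPath (H : SimpleGraph V) (x y z : V) : Prop where
  adj_left_iff : ∀ v, H.Adj x v ↔ v = y
  adj_right_iff : ∀ v, H.Adj z v ↔ v = y
  eq_or_eq_of_adj_middle : ∀ v, H.Adj y v → v = x ∨ v = z

namespace IsComponentPath

variable [DecidableEq V]

lemma notMem_of_adj (hP : H.IsComponentPath x y z) {u v : V} (huv : H.Adj u v)
    (hv : v ∉ ({x, y, z} : Finset V)) : u ∉ ({x, y, z} : Finset V) := by
  simp only [mem_insert, mem_singleton, not_or] at hv ⊢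
  refine ⟨?_, ?_, ?_⟩ <;> rintro rfl
  · exact hv.2.1 ((hP.adj_left_iff v).1 huv)
  · exact (hP.eq_or_eq_of_adj_middle v huv).elim hv.1 hv.2.2
  · exact hv.2.1 ((hP.adj_right_iff v).1 huv)

lemma subset_of_isTotalRestrainedDominatingSet (hP : H.IsComponentPath x y z) {S : Finset V}
    (hS : H.IsTotalRestrainedDominatingSet S) : {x, y, z} ⊆ S := by
  have hy : y ∈ S := by
    obtain ⟨u, hu, hux⟩ := hS.1 x
    rwa [← (hP.adj_left_iff u).1 hux.symm]
  have hleaf : ∀ p, (∀ v, H.Adj p v ↔ v = y) → p ∈ S := fun p hp => by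
    by_contra hpS
    obtain ⟨w, hw, hwp⟩ := hS.2 p hpS
    exact hw ((hp w).1 hwp.symm ▸ hy)
  simp [insert_subset_iff, hleaf x hP.adj_left_iff, hy, hleaf z hP.adj_right_iff]

lemma isTotalRestrainedDominatingSet_of_subset (hP : H.IsComponentPath x y z) (hHG : H ≤ G)
    {S S' : Finset V} (hS' : H.IsTotalRestrainedDominatingSet S')
    (hS'S : S' \ {x, y, z} ⊆ S) (hSS' : S ⊆ S')
    (hdom : ∀ p ∈ ({x, y, z} : Finset V), ∃ u ∈ S, G.Adj u p)
    (hres : ∀ p ∈ ({x, y, z} : Finset V), p ∉ S → ∃ w ∉ S, G.Adj w p) :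
    G.IsTotalRestrainedDominatingSet S := by
  refine ⟨fun v => ?_, fun v hv => ?_⟩
  · by_cases hvT : v ∈ ({x, y, z} : Finset V)
    · exact hdom v hvT
    obtain ⟨u, huS', hu⟩ := hS'.1 v
    exact ⟨u, hS'S (mem_sdiff.2 ⟨huS', hP.notMem_of_adj hu hvT⟩), hHG hu⟩
  · by_cases hvT : v ∈ ({x, y, z} : Finset V)
    · exact hres v hvT hv
    obtain ⟨w, hwS', hw⟩ := hS'.2 v fun h => hv (hS'S (mem_sdiff.2 ⟨h, hvT⟩))
    exact ⟨w, fun h => hwS' (hSS' h), hHG hw⟩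

lemma isTotalRestrainedDominatingSet_erase (hP : H.IsComponentPath x y z) (hHG : H ≤ G)
    {S : Finset V} (hS : H.IsTotalRestrainedDominatingSet S) {p : V}
    (hp : p ∈ ({x, y, z} : Finset V)) (hpS : ∃ r ∉ S, G.Adj r p)
    (hdom : ∀ q ∈ ({x, y, z} : Finset V), ∃ u ∈ S.erase p, G.Adj u q) :
    G.IsTotalRestrainedDominatingSet (S.erase p) := by
  refine hP.isTotalRestrainedDominatingSet_of_subset hHG hS (fun v hv => ?_) (erase_subset p S)
    hdom fun q hq hqS => ?_
  · exact mem_erase.2 ⟨fun h => (mem_sdiff.1 hv).2 (h ▸ hp), (mem_sdiff.1 hv).1⟩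
  · obtain rfl : q = p := by_contra fun h =>
      hqS (mem_erase.2 ⟨h, hP.subset_of_isTotalRestrainedDominatingSet hS hq⟩)
    obtain ⟨r, hr, hrq⟩ := hpS
    exact ⟨r, fun h => hr (mem_of_mem_erase h), hrq⟩

lemma isTotalRestrainedDominatingSet_sdiff (hP : H.IsComponentPath x y z) (hHG : H ≤ G)
    {S : Finset V} (hS : H.IsTotalRestrainedDominatingSet S)
    (hdom : ∀ q ∈ ({x, y, z} : Finset V), ∃ u ∈ S \ {x, y, z}, G.Adj u q) :
    G.IsTotalRestrainedDominatingSet (S \ {x, y, z}) := by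
  have hyx := hHG ((hP.adj_left_iff y).2 rfl).symm
  have hyz := hHG ((hP.adj_right_iff y).2 rfl).symm
  have hT : ∀ p ∈ ({x, y, z} : Finset V), p ∉ S \ {x, y, z} :=
    fun p hp h => (mem_sdiff.1 h).2 hp
  refine hP.isTotalRestrainedDominatingSet_of_subset hHG hS subset_rfl sdiff_subset hdom ?_
  simp only [mem_insert, mem_singleton, forall_eq_or_imp, forall_eq]
  exact ⟨fun _ => ⟨y, hT y (by simp), hyx⟩, fun _ => ⟨x, hT x (by simp), hyx.symm⟩,
    fun _ => ⟨y, hT y (by simp), hyz⟩⟩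

theorem exists_isTotalRestrainedDominatingSet_card_lt (hP : H.IsComponentPath x y z)
    (hHG : H ≤ G) (hxz : x ≠ z) (hout : ∀ p, ∃ w ∉ ({x, y, z} : Finset V), G.Adj p w)
    {S' : Finset V} (hS' : H.IsTotalRestrainedDominatingSet S') :
    ∃ S, G.IsTotalRestrainedDominatingSet S ∧ #S < #S' := by
  set T : Finset V := {x, y, z}
  have hTS' : T ⊆ S' := hP.subset_of_isTotalRestrainedDominatingSet hS'
  have hxT : x ∈ T := by simp [T]
  have hyT : y ∈ T := by simp [T]
  have hzT : z ∈ T := by simp [T]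
  have hxy : G.Adj x y := hHG ((hP.adj_left_iff y).2 rfl)
  have hzy : G.Adj z y := hHG ((hP.adj_right_iff y).2 rfl)
  have hclosed : ∀ p, (∀ w, G.Adj w p → w ∈ S') → ∃ u ∈ S' \ T, G.Adj u p := by
    intro p hp
    obtain ⟨w, hwT, hpw⟩ := hout p
    exact ⟨w, mem_sdiff.2 ⟨hp w hpw.symm, hwT⟩, hpw.symm⟩
  have hlt : ∀ p ∈ T, #(S'.erase p) < #S' := fun p hp => card_erase_lt_of_mem (hTS' hp)
  -- Drop from `S'` a vertex of the path having a neighbour outside `S'`, or else the whole path.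
  by_cases hx : ∃ r ∉ S', G.Adj r x
  · refine ⟨S'.erase x, hP.isTotalRestrainedDominatingSet_erase hHG hS' hxT hx ?_, hlt x hxT⟩
    simp only [mem_insert, mem_singleton, forall_eq_or_imp, forall_eq, mem_erase]
    exact ⟨⟨y, ⟨hxy.ne', hTS' hyT⟩, hxy.symm⟩, ⟨z, ⟨hxz.symm, hTS' hzT⟩, hzy⟩,
      ⟨y, ⟨hxy.ne', hTS' hyT⟩, hzy.symm⟩⟩
  by_cases hz : ∃ r ∉ S', G.Adj r z
  · refine ⟨S'.erase z, hP.isTotalRestrainedDominatingSet_erase hHG hS' hzT hz ?_, hlt z hzT⟩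
    simp only [mem_insert, mem_singleton, forall_eq_or_imp, forall_eq, mem_erase]
    exact ⟨⟨y, ⟨hzy.ne', hTS' hyT⟩, hxy.symm⟩, ⟨x, ⟨hxz, hTS' hxT⟩, hxy⟩,
      ⟨y, ⟨hzy.ne', hTS' hyT⟩, hzy.symm⟩⟩
  obtain ⟨u, hu, hux⟩ := hclosed x fun w hw => by_contra fun h => hx ⟨w, h, hw⟩
  obtain ⟨u', hu', hu'z⟩ := hclosed z fun w hw => by_contra fun h => hz ⟨w, h, hw⟩
  by_cases hy : ∃ r ∉ S', G.Adj r y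
  · refine ⟨S'.erase y, hP.isTotalRestrainedDominatingSet_erase hHG hS' hyT hy ?_, hlt y hyT⟩
    have hsub : S' \ T ⊆ S'.erase y := fun v hv =>
      mem_erase.2 ⟨fun h => (mem_sdiff.1 hv).2 (h ▸ hyT), (mem_sdiff.1 hv).1⟩
    simp only [mem_insert, mem_singleton, forall_eq_or_imp, forall_eq]
    exact ⟨⟨u, hsub hu, hux⟩, ⟨x, mem_erase.2 ⟨hxy.ne, hTS' hxT⟩, hxy⟩,
      ⟨u', hsub hu', hu'z⟩⟩
  · obtain ⟨u'', hu'', hu''y⟩ := hclosed y fun w hw => by_contra fun h => hy ⟨w, h, hw⟩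
    refine ⟨S' \ T, hP.isTotalRestrainedDominatingSet_sdiff hHG hS' ?_,
      card_lt_card (sdiff_ssubset hTS' ⟨x, hxT⟩)⟩
    simp only [mem_insert, mem_singleton, forall_eq_or_imp, forall_eq]
    exact ⟨⟨u, hu, hux⟩, ⟨u'', hu'', hu''y⟩, ⟨u', hu', hu'z⟩⟩

theorem totalRestrainedDominationNumber_lt [Fintype V] (hP : H.IsComponentPath x y z)
    (hHG : H ≤ G) (hxz : x ≠ z) (hout : ∀ p, ∃ w ∉ ({x, y, z} : Finset V), G.Adj p w)
    (hH : ∀ v, ∃ u, H.Adj u v) :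
    G.totalRestrainedDominationNumber < H.totalRestrainedDominationNumber := by
  obtain ⟨S', hS', hcard⟩ := exists_isTotalRestrainedDominatingSet_card_eq hH
  obtain ⟨S, hS, hlt⟩ := hP.exists_isTotalRestrainedDominatingSet_card_lt hHG hxz hout hS'
  exact hS.totalRestrainedDominationNumber_le.trans_lt (hcard ▸ hlt)

end IsComponentPath

end ComponentPath

section PathCut

variable {V : Type*} [Fintype V] [DecidableEq V] (G : SimpleGraph V) [DecidableRel G.Adj]
  {x y z : V}

def pathCutEdges (x y z : V) : Finset (Sym2 V) :=
  {e ∈ G.edgeFinset | (x ∈ e ∨ y ∈ e ∨ z ∈ e) ∧ e ≠ s(x, y) ∧ e ≠ s(y, z)}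

lemma coe_pathCutEdges_subset : ↑(G.pathCutEdges x y z) ⊆ G.edgeSet := fun e he => by
  simpa [pathCutEdges] using (mem_filter.1 he).1

lemma card_pathCutEdges_add_four_le (hxy : G.Adj x y) (hyz : G.Adj y z) (hxz : x ≠ z) :
    #(G.pathCutEdges x y z) + 4 ≤ G.degree x + G.degree y + G.degree z := by
  have hsub : G.pathCutEdges x y z ⊆ (G.incidenceFinset x).erase s(x, y) ∪
      ((G.incidenceFinset y).erase s(x, y)).erase s(y, z) ∪
      (G.incidenceFinset z).erase s(y, z) := by
    intro e he
    simp only [pathCutEdges, mem_filter, mem_edgeFinset, mem_union, mem_erase,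
      mem_incidenceFinset, incidenceSet, Set.mem_ofPred_eq] at he ⊢
    tauto
  have hx := card_erase_add_one (s := G.incidenceFinset x) (a := s(x, y)) (by simp [hxy])
  have hy₁ := card_erase_add_one (s := G.incidenceFinset y) (a := s(x, y))
    (by simpa using G.mk'_mem_incidenceSet_right_iff.2 hxy)
  have hy₂ := card_erase_add_one (s := (G.incidenceFinset y).erase s(x, y)) (a := s(y, z))
    (by simp [hyz, hxz.symm, hyz.ne.symm])
  have hz := card_erase_add_one (s := G.incidenceFinset z) (a := s(y, z))
    (by simpa using G.mk'_mem_incidenceSet_right_iff.2 hyz)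
  simp only [card_incidenceFinset_eq_degree] at hx hy₁ hz
  have := card_le_card hsub
  have := card_union_le (((G.incidenceFinset x).erase s(x, y)) ∪
    ((G.incidenceFinset y).erase s(x, y)).erase s(y, z)) ((G.incidenceFinset z).erase s(y, z))
  have := card_union_le ((G.incidenceFinset x).erase s(x, y))
    (((G.incidenceFinset y).erase s(x, y)).erase s(y, z))
  omega

variable {G}

lemma deleteEdges_pathCutEdges_adj {u v : V} :
    (G.deleteEdges ↑(G.pathCutEdges x y z)).Adj u v ↔ G.Adj u v ∧
      (s(u, v) = s(x, y) ∨ s(u, v) = s(y, z) ∨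
        u ∉ ({x, y, z} : Finset V) ∧ v ∉ ({x, y, z} : Finset V)) := by
  simp only [deleteEdges_adj, pathCutEdges, coe_filter, Set.mem_ofPred_eq, mem_edgeFinset,
    mem_edgeSet, Sym2.mem_iff, mem_insert, mem_singleton]
  grind

lemma isComponentPath_deleteEdges_pathCutEdges (hxy : G.Adj x y) (hyz : G.Adj y z)
    (hxz : x ≠ z) : (G.deleteEdges ↑(G.pathCutEdges x y z)).IsComponentPath x y z where
  adj_left_iff v := by grind [deleteEdges_pathCutEdges_adj, Sym2.eq_iff, G.ne_of_adj]
  adj_right_iff v := by grind [deleteEdges_pathCutEdges_adj, Sym2.eq_iff, G.ne_of_adj, G.adj_symm]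
  eq_or_eq_of_adj_middle v h := by grind [deleteEdges_pathCutEdges_adj, Sym2.eq_iff]

theorem totalRestrainedBondageNumber_add_four_le (hxy : G.Adj x y) (hyz : G.Adj y z) (hxz : x ≠ z)
    (hout : ∀ p, ∃ w ∉ ({x, y, z} : Finset V), G.Adj p w) :
    G.totalRestrainedBondageNumber + 4 ≤ G.degree x + G.degree y + G.degree z := by
  have hP := isComponentPath_deleteEdges_pathCutEdges hxy hyz hxz
  have hiso : ∀ v, ∃ u, (G.deleteEdges ↑(G.pathCutEdges x y z)).Adj u v := by
    intro v
    by_cases hv : v ∈ ({x, y, z} : Finset V)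
    · simp only [mem_insert, mem_singleton] at hv
      rcases hv with rfl | rfl | rfl
      · exact ⟨y, ((hP.adj_left_iff y).2 rfl).symm⟩
      · exact ⟨x, (hP.adj_left_iff v).2 rfl⟩
      · exact ⟨y, ((hP.adj_right_iff y).2 rfl).symm⟩
    · obtain ⟨w, hw, hvw⟩ := hout v
      exact ⟨w, deleteEdges_pathCutEdges_adj.2 ⟨hvw.symm, .inr (.inr ⟨hw, hv⟩)⟩⟩
  have hlt := hP.totalRestrainedDominationNumber_lt (deleteEdges_le _) hxz hout hiso
  calc G.totalRestrainedBondageNumber + 4 ≤ #(G.pathCutEdges x y z) + 4 := by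
        gcongr
        exact totalRestrainedBondageNumber_le_card G.coe_pathCutEdges_subset hiso hlt
    _ ≤ G.degree x + G.degree y + G.degree z := by
        exact_mod_cast G.card_pathCutEdges_add_four_le hxy hyz hxz

end PathCut

end SimpleGraph

theorem statement_13_general {V : Type*} [Fintype V] [DecidableEq V] (G : SimpleGraph V)
    [DecidableRel G.Adj] (hδ : 4 ≤ G.minDegree) :
    ∃ b : ℕ, G.totalRestrainedBondageNumber = (b : ℕ∞) ∧
      (b : ℝ) ≤ 2 * G.averageDegree + (G.maxDegree : ℝ) - 4 := by
  obtain ⟨x, y, z, hxy, hyz, hxz, hdeg⟩ := G.exists_adj_adj_degree_add_le (by omega)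
  have hout : ∀ p, ∃ w ∉ ({x, y, z} : Finset V), G.Adj p w := fun p =>
    G.exists_adj_notMem_of_card_lt_degree _
      (card_le_three.trans_lt (by have := G.minDegree_le_degree p; omega))
  have hb := G.totalRestrainedBondageNumber_add_four_le hxy hyz hxz hout
  obtain ⟨b, hb_eq⟩ := ENat.ne_top_iff_exists.1 (ne_top_of_le_ne_top (ENat.natCast_ne_top _)
    (le_self_add.trans hb))
  rw [← hb_eq] at hb
  have hb' : (b : ℝ) + 4 ≤ G.degree x + G.degree y + G.degree z := by exact_mod_cast hb
  exact ⟨b, hb_eq.symm, by linarith⟩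

/-- `b_tr(G) ≤ 2 ad(G) + Δ(G) - 4` for connected graphs with `δ ≥ 4`. -/
theorem statement_13 {V : Type*} [Fintype V] [DecidableEq V] (G : SimpleGraph V)
    [DecidableRel G.Adj] (hconn : G.Connected) (hδ : 4 ≤ G.minDegree)
    (hcard : 5 ≤ Fintype.card V) :
    ∃ b : ℕ, G.totalRestrainedBondageNumber = (b : ℕ∞) ∧
      (b : ℝ) ≤ 2 * G.averageDegree + (G.maxDegree : ℝ) - 4 :=
  statement_13_general G hδ
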